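/- Let R be the minimum of two i.i.d. chi-squared random variables each with n₁-1 degrees of freedom, where n₁ ≥ 3. Then for η > 0, E[2Φ̄(η√R)] ≤ 2Γ((n₁-2)/2)/(√π · Γ((n₁-1)/2) · η · (η²+1)^((n₁-2)/2)). -/

import Mathlib

/-!
Since `2 (1 - F) f` is the density of the minimum and `1 - F ≤ 1`, the integrand is at most
`4 Φ̄(η √x) f(x)`. The Mills ratio bound `Φ̄(y) ≤ e^{-y²/2} / (y √(2π))` at `y = η √x` turns this
into a multiple of `x ^ (s - 1) e^{-(η² + 1) x / 2}` with `s = (n₁ - 2) / 2`, a Gamma integrand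
whose integral over `(0, ∞)` is `Γ(s) (2 / (η² + 1)) ^ s`.
-/

open Real MeasureTheory

/-- Complementary CDF of the standard normal distribution. -/
noncomputable def stdNormalCCDF (x : ℝ) : ℝ :=
  ∫ t in Set.Ioi x, Real.exp (-t ^ 2 / 2) / Real.sqrt (2 * Real.pi)

/-- Density of the chi-squared distribution with `ν` degrees of freedom
(for arguments in `(0,∞)`). -/
noncomputable def chiSqPDF (ν : ℝ) (x : ℝ) : ℝ :=
  x ^ (ν / 2 - 1) * Real.exp (-x / 2) / ((2 : ℝ) ^ (ν / 2) * Real.Gamma (ν / 2))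

/-- CDF of the chi-squared distribution with `ν` degrees of freedom. -/
noncomputable def chiSqCDF (ν : ℝ) (x : ℝ) : ℝ :=
  ∫ t in Set.Ioc (0 : ℝ) x, chiSqPDF ν t

open Set Filter

lemma integrable_exp_neg_sq_div_two : Integrable fun t : ℝ => exp (-t ^ 2 / 2) := by
  simpa [neg_div, div_eq_inv_mul] using integrable_exp_neg_mul_sq (b := 1 / 2) (by norm_num)

lemma integrable_mul_exp_neg_sq_div_two : Integrable fun t : ℝ => t * exp (-t ^ 2 / 2) := by
  simpa [neg_div, div_eq_inv_mul] using integrable_mul_exp_neg_mul_sq (b := 1 / 2) (by norm_num)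

lemma integral_Ioi_mul_exp_neg_sq_div_two (y : ℝ) :
    ∫ t in Ioi y, t * exp (-t ^ 2 / 2) = exp (-y ^ 2 / 2) := by
  have hderiv (t : ℝ) : HasDerivAt (fun t : ℝ => -exp (-t ^ 2 / 2)) (t * exp (-t ^ 2 / 2)) t := by
    have h : HasDerivAt (fun t : ℝ => -t ^ 2 / 2) (-t) t :=
      ((hasDerivAt_pow 2 t).neg.div_const 2).congr_deriv (by ring)
    exact h.exp.neg.congr_deriv (by ring)
  have hlim : Tendsto (fun t : ℝ => -exp (-t ^ 2 / 2)) atTop (nhds 0) := by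
    have h : Tendsto (fun t : ℝ => -t ^ 2 / 2) atTop atBot := by
      simp_rw [neg_div]
      exact tendsto_neg_atTop_atBot.comp
        ((tendsto_pow_atTop two_ne_zero).atTop_div_const two_pos)
    simpa using (tendsto_exp_atBot.comp h).neg
  rw [integral_Ioi_of_hasDerivAt_of_tendsto' (fun t _ => hderiv t)
    integrable_mul_exp_neg_sq_div_two.integrableOn hlim]
  ring

lemma stdNormalCCDF_nonneg (x : ℝ) : 0 ≤ stdNormalCCDF x :=
  setIntegral_nonneg measurableSet_Ioi fun _ _ => by positivity

lemma stdNormalCCDF_le_exp_div {y : ℝ} (hy : 0 < y) :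
    stdNormalCCDF y ≤ exp (-y ^ 2 / 2) / (y * √(2 * π)) := by
  calc stdNormalCCDF y ≤ ∫ t in Ioi y, t * exp (-t ^ 2 / 2) / (y * √(2 * π)) := by
        refine setIntegral_mono_on (integrable_exp_neg_sq_div_two.div_const _).integrableOn
          (integrable_mul_exp_neg_sq_div_two.div_const _).integrableOn measurableSet_Ioi
          fun t (ht : y < t) => ?_
        rw [mul_comm y, ← div_div, le_div_iff₀ hy, div_mul_eq_mul_div, mul_comm]
        gcongr
    _ = exp (-y ^ 2 / 2) / (y * √(2 * π)) := by
        rw [integral_div, integral_Ioi_mul_exp_neg_sq_div_two]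

section ChiSquared

variable {ν : ℝ}

lemma chiSqPDF_nonneg (hν : 0 < ν) {x : ℝ} (hx : 0 ≤ x) : 0 ≤ chiSqPDF ν x := by
  have := Gamma_pos_of_pos (half_pos hν)
  unfold chiSqPDF
  positivity

lemma integral_chiSqPDF (hν : 0 < ν) : ∫ x in Ioi 0, chiSqPDF ν x = 1 := by
  have := Gamma_pos_of_pos (half_pos hν)
  have hpdf : chiSqPDF ν =
      fun x => x ^ (ν / 2 - 1) * exp (-(2⁻¹ * x)) / (2 ^ (ν / 2) * Gamma (ν / 2)) := by
    ext x
    rw [chiSqPDF, inv_mul_eq_div, neg_div]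
  rw [hpdf, integral_div, integral_rpow_mul_exp_neg_mul_Ioi (half_pos hν) (by norm_num),
    one_div, inv_inv]
  field_simp

lemma integrableOn_chiSqPDF (hν : 0 < ν) : IntegrableOn (chiSqPDF ν) (Ioi 0) :=
  integrable_of_integral_eq_one (integral_chiSqPDF hν)

lemma chiSqCDF_nonneg (hν : 0 < ν) (x : ℝ) : 0 ≤ chiSqCDF ν x :=
  setIntegral_nonneg measurableSet_Ioc fun _ ht => chiSqPDF_nonneg hν ht.1.le

lemma chiSqCDF_le_one (hν : 0 < ν) (x : ℝ) : chiSqCDF ν x ≤ 1 :=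
  integral_chiSqPDF hν ▸ setIntegral_mono_set (integrableOn_chiSqPDF hν)
    ((ae_restrict_iff' measurableSet_Ioi).mpr (.of_forall fun _ ht => chiSqPDF_nonneg hν ht.le))
    Ioc_subset_Ioi_self.eventuallyLE

end ChiSquared

lemma stdNormalCCDF_mul_chiSqPDF_le {ν η x : ℝ} (hν : 0 < ν) (hη : 0 < η) (hx : 0 < x) :
    stdNormalCCDF (η * √x) * chiSqPDF ν x ≤
      x ^ ((ν - 1) / 2 - 1) * exp (-((η ^ 2 + 1) / 2 * x)) /
        (η * √(2 * π) * (2 ^ (ν / 2) * Gamma (ν / 2))) := by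
  have hsqrt : 0 < √x := sqrt_pos.mpr hx
  calc stdNormalCCDF (η * √x) * chiSqPDF ν x
      ≤ exp (-(η * √x) ^ 2 / 2) / (η * √x * √(2 * π)) * chiSqPDF ν x :=
        mul_le_mul_of_nonneg_right (stdNormalCCDF_le_exp_div (by positivity))
          (chiSqPDF_nonneg hν hx.le)
    _ = _ := by
        have hpow : x ^ (ν / 2 - 1) = x ^ ((ν - 1) / 2 - 1) * √x := by
          rw [sqrt_eq_rpow, ← rpow_add hx]
          ring_nf
        have hexp : exp (-(η * √x) ^ 2 / 2) * exp (-x / 2) = exp (-((η ^ 2 + 1) / 2 * x)) := by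
          rw [← exp_add, mul_pow, sq_sqrt hx.le]
          ring_nf
        rw [chiSqPDF, hpow, ← hexp]
        field_simp

lemma integral_stdNormalCCDF_mul_minChiSqPDF_le {ν η : ℝ} (hν : 1 < ν) (hη : 0 < η) :
    ∫ x in Ioi 0, 2 * stdNormalCCDF (η * √x) * (2 * (1 - chiSqCDF ν x) * chiSqPDF ν x)
      ≤ 2 * Gamma ((ν - 1) / 2) / (√π * Gamma (ν / 2) * η * (η ^ 2 + 1) ^ ((ν - 1) / 2)) := by
  have hν₀ : 0 < ν := by linarith
  set s := (ν - 1) / 2 with hs_def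
  set b := (η ^ 2 + 1) / 2 with hb_def
  have hs : 0 < s := by rw [hs_def]; linarith
  have hb : 0 < b := by positivity
  set D := η * √(2 * π) * (2 ^ (ν / 2) * Gamma (ν / 2)) with hD_def
  have hnonneg : ∀ x ∈ Ioi (0 : ℝ),
      0 ≤ 2 * stdNormalCCDF (η * √x) * (2 * (1 - chiSqCDF ν x) * chiSqPDF ν x) := fun x hx => by
    have := chiSqCDF_le_one hν₀ x
    have := chiSqPDF_nonneg hν₀ (le_of_lt hx)
    have := stdNormalCCDF_nonneg (η * √x)
    positivity
  have hle : ∀ x ∈ Ioi (0 : ℝ),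
      2 * stdNormalCCDF (η * √x) * (2 * (1 - chiSqCDF ν x) * chiSqPDF ν x)
        ≤ 4 * (x ^ (s - 1) * exp (-(b * x)) / D) := fun x (hx : 0 < x) => by
    have hprod := mul_nonneg (stdNormalCCDF_nonneg (η * √x)) (chiSqPDF_nonneg hν₀ hx.le)
    calc _ = 4 * ((1 - chiSqCDF ν x) * (stdNormalCCDF (η * √x) * chiSqPDF ν x)) := by ring
      _ ≤ 4 * (stdNormalCCDF (η * √x) * chiSqPDF ν x) :=
          mul_le_mul_of_nonneg_left
            (mul_le_of_le_one_left hprod (sub_le_self 1 (chiSqCDF_nonneg hν₀ x))) (by norm_num)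
      _ ≤ _ := by
          gcongr
          exact stdNormalCCDF_mul_chiSqPDF_le hν₀ hη hx
  have hint : IntegrableOn (fun x => x ^ (s - 1) * exp (-(b * x))) (Ioi 0) :=
    (integrableOn_rpow_mul_exp_neg_mul_rpow (s := s - 1) (by linarith) one_pos hb).congr_fun
      (fun x _ => by simp only [rpow_one, neg_mul]) measurableSet_Ioi
  calc _ ≤ ∫ x in Ioi 0, 4 * (x ^ (s - 1) * exp (-(b * x)) / D) :=
        integral_mono_of_nonneg ((ae_restrict_iff' measurableSet_Ioi).mpr (.of_forall hnonneg))
          ((hint.div_const D).const_mul 4)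
          ((ae_restrict_iff' measurableSet_Ioi).mpr (.of_forall hle))
    _ = 4 * ((1 / b) ^ s * Gamma s) / D := by
        rw [integral_const_mul, integral_div, integral_rpow_mul_exp_neg_mul_Ioi hs hb, mul_div]
    _ = _ := by
        have h2ν : (2 : ℝ) ^ (ν / 2) = 2 ^ s * √2 := by
          rw [sqrt_eq_rpow, ← rpow_add two_pos, hs_def]
          ring_nf
        have hb_pow : (1 / b) ^ s = 2 ^ s / (η ^ 2 + 1) ^ s := by
          rw [hb_def, one_div_div, div_rpow two_pos.le (by positivity)]
        have := Gamma_pos_of_pos (half_pos hν₀)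
        rw [hD_def, hb_pow, h2ν, sqrt_mul two_pos.le]
        field_simp
        rw [sq_sqrt two_pos.le]
        ring

/-- Bound on `E[2Φ̄(η√R)]` where `R` is the minimum of two i.i.d. chi-squared
random variables with `n₁ - 1` degrees of freedom (so `R` has density
`f_R(x) = 2(1 - F(x)) f(x)`): for `η > 0` and `n₁ ≥ 3`,
`E[2Φ̄(η√R)] ≤ 2Γ((n₁-2)/2)/(√π Γ((n₁-1)/2) η (η²+1)^{(n₁-2)/2})`. -/
theorem expectation_ccdf_min_chiSq_le (n₁ : ℕ) (hn : 3 ≤ n₁) (η : ℝ) (hη : 0 < η) :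
    (∫ x in Set.Ioi (0 : ℝ),
        2 * stdNormalCCDF (η * Real.sqrt x) *
          (2 * (1 - chiSqCDF ((n₁ : ℝ) - 1) x) * chiSqPDF ((n₁ : ℝ) - 1) x))
      ≤ 2 * Real.Gamma (((n₁ : ℝ) - 2) / 2) /
          (Real.sqrt Real.pi * Real.Gamma (((n₁ : ℝ) - 1) / 2) * η *
            (η ^ 2 + 1) ^ (((n₁ : ℝ) - 2) / 2)) := by
  have hν : 1 < (n₁ : ℝ) - 1 := by
    have : (3 : ℝ) ≤ n₁ := by exact_mod_cast hn
    linarith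
  rw [show ((n₁ : ℝ) - 2) / 2 = ((n₁ : ℝ) - 1 - 1) / 2 by ring]
  exact integral_stdNormalCCDF_mul_minChiSqPDF_le hν hη
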